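/- arXiv:2007.05157 — 5 statements merged into one kernel-verified Lean document; each statement's English description precedes it below -/
import Mathlib

section
/- Let x, x' ∈ [0,1]^n be vectors differing in exactly one coordinate, and define nvar(x) = Σᵢ xᵢ² − (Σᵢ xᵢ)²/n. Then |nvar(x) − nvar(x')| ≤ 1 − 1/n. -/
lemma nvar_aux (n : ℕ) (hn : 0 < n) (a b S : ℝ)
    (ha0 : 0 ≤ a) (ha1 : a ≤ 1) (hb0 : 0 ≤ b) (hb1 : b ≤ 1)
    (hS0 : 0 ≤ S) (hS1 : S ≤ (n:ℝ) - 1) :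
    (n:ℝ)*(a^2-b^2) - (a-b)*(2*S+a+b) ≤ (n:ℝ) - 1 := by
  have hn1 : (1:ℝ) ≤ n := by exact_mod_cast hn
  rcases le_total b a with h | h
  · have hA : ((n:ℝ)-1)*(a^2-b^2) ≤ ((n:ℝ)-1)*1 :=
      mul_le_mul_of_nonneg_left (by nlinarith [sq_nonneg b]) (by linarith)
    nlinarith [hA, mul_nonneg hS0 (sub_nonneg.2 h)]
  · have h2 : S * (b - a) ≤ ((n:ℝ)-1) * (b-a) :=
      mul_le_mul_of_nonneg_right (by linarith) (by linarith)
    have hA : ((n:ℝ)-1)*((1-a)^2-(1-b)^2) ≤ ((n:ℝ)-1)*1 :=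
      mul_le_mul_of_nonneg_left (by nlinarith [sq_nonneg (1-b)]) (by linarith)
    nlinarith [hA, h2]

lemma nvar_key (n : ℕ) (hn : 0 < n) (a b S : ℝ)
    (ha0 : 0 ≤ a) (ha1 : a ≤ 1) (hb0 : 0 ≤ b) (hb1 : b ≤ 1)
    (hS0 : 0 ≤ S) (hS1 : S ≤ (n:ℝ) - 1) :
    |(a^2 - (S+a)^2/n) - (b^2 - (S+b)^2/n)| ≤ 1 - 1/n := by
  have hn' : (0:ℝ) < n := by exact_mod_cast hn
  have h1 : (a^2 - (S+a)^2/n) - (b^2 - (S+b)^2/n)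
      = ((n:ℝ)*(a^2-b^2) - (a-b)*(2*S+a+b))/n := by
    field_simp; ring
  rw [h1, abs_div, abs_of_pos hn', div_le_iff₀ hn']
  have h2 := nvar_aux n hn a b S ha0 ha1 hb0 hb1 hS0 hS1
  have h3 := nvar_aux n hn b a S hb0 hb1 ha0 ha1 hS0 hS1
  have h4 : |(n:ℝ)*(a^2-b^2) - (a-b)*(2*S+a+b)| ≤ (n:ℝ) - 1 := by
    rw [abs_le]; constructor <;> nlinarith
  have h5 : (1 - 1/(n:ℝ)) * n = (n:ℝ) - 1 := by field_simp
  linarith [h5 ▸ h4]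

/-- sensitivity of nvar. -/
theorem nvar_sensitivity (n : ℕ) (hn : 0 < n) (x x' : Fin n → ℝ)
    (hx : ∀ i, x i ∈ Set.Icc (0:ℝ) 1) (hx' : ∀ i, x' i ∈ Set.Icc (0:ℝ) 1)
    (hneighbor : {i | x i ≠ x' i}.ncard = 1) :
    |((∑ i, (x i)^2) - (∑ i, x i)^2 / n) - ((∑ i, (x' i)^2) - (∑ i, x' i)^2 / n)|
      ≤ 1 - 1 / n := by
  obtain ⟨i₀, hi₀⟩ := Set.ncard_eq_one.mp hneighbor
  have heq : ∀ j, j ≠ i₀ → x j = x' j := by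
    intro j hj
    by_contra hne
    have hmem : j ∈ {i | x i ≠ x' i} := hne
    rw [hi₀] at hmem
    exact hj hmem
  set S : ℝ := ∑ i ∈ Finset.univ.erase i₀, x i with hS
  have hSeq : ∑ i ∈ Finset.univ.erase i₀, x' i = S := by
    apply Finset.sum_congr rfl
    intro j hj
    exact (heq j (Finset.ne_of_mem_erase hj)).symm
  have hsum : ∑ i, x i = x i₀ + S :=
    (Finset.add_sum_erase _ x (Finset.mem_univ i₀)).symm
  have hsum' : ∑ i, x' i = x' i₀ + S := by
    rw [← hSeq]; exact (Finset.add_sum_erase _ x' (Finset.mem_univ i₀)).symm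
  have hsq : ∑ i, (x i)^2 - ∑ i, (x' i)^2 = (x i₀)^2 - (x' i₀)^2 := by
    rw [← Finset.add_sum_erase _ (fun i => (x i)^2) (Finset.mem_univ i₀),
        ← Finset.add_sum_erase _ (fun i => (x' i)^2) (Finset.mem_univ i₀)]
    have : ∑ i ∈ Finset.univ.erase i₀, (x i)^2
        = ∑ i ∈ Finset.univ.erase i₀, (x' i)^2 :=
      Finset.sum_congr rfl fun j hj => by rw [heq j (Finset.ne_of_mem_erase hj)]
    rw [this]; ring
  have hS0 : 0 ≤ S := Finset.sum_nonneg fun i _ => (hx i).1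
  have hS1 : S ≤ (n:ℝ) - 1 := by
    have hcard : (Finset.univ.erase i₀).card = n - 1 := by
      rw [Finset.card_erase_of_mem (Finset.mem_univ i₀), Finset.card_univ,
        Fintype.card_fin]
    have := Finset.sum_le_card_nsmul (Finset.univ.erase i₀) x 1
      (fun i _ => (hx i).2)
    rw [hcard] at this
    simp only [nsmul_eq_mul, mul_one] at this
    rw [hS]
    calc ∑ i ∈ Finset.univ.erase i₀, x i ≤ ((n-1:ℕ):ℝ) := this
      _ = (n:ℝ) - 1 := by rw [Nat.cast_sub hn, Nat.cast_one]
  have key := nvar_key n hn (x i₀) (x' i₀) S (hx i₀).1 (hx i₀).2 (hx' i₀).1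
    (hx' i₀).2 hS0 hS1
  have : ((∑ i, (x i)^2) - (∑ i, x i)^2 / n) - ((∑ i, (x' i)^2) - (∑ i, x' i)^2 / n)
      = ((x i₀)^2 - (S + x i₀)^2/n) - ((x' i₀)^2 - (S + x' i₀)^2/n) := by
    rw [hsum, hsum']
    linear_combination hsq
  rw [this]
  exact key
end

section
/- Let (x,y), (x',y') ∈ ([0,1]×[0,1])^n be datasets differing in exactly one datapoint, and define ncov(x,y) = Σᵢ xᵢyᵢ − (Σᵢ xᵢ)(Σᵢ yᵢ)/n. Then |ncov(x,y) − ncov(x',y')| ≤ 1 − 1/n. -/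
lemma corner_aux (m a b a' b' u v : ℝ) (hm : 0 ≤ m)
    (ha0 : 0 ≤ a) (ha1 : a ≤ 1) (hb0 : 0 ≤ b) (hb1 : b ≤ 1)
    (ha'0 : 0 ≤ a') (ha'1 : a' ≤ 1) (hb'0 : 0 ≤ b') (hb'1 : b' ≤ 1)
    (hu0 : 0 ≤ u) (hum : u ≤ m) (hv0 : 0 ≤ v) (hvm : v ≤ m) :
    |m * (a * b - a' * b') - u * (b - b') - v * (a - a')| ≤ m := by
  rcases eq_or_lt_of_le hm with h | h
  · have hu : u = 0 := le_antisymm (by linarith) hu0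
    have hv : v = 0 := le_antisymm (by linarith) hv0
    simp [hu, hv, ← h]
  · have hints : 0 ≤ a * b ∧ a * b ≤ 1 ∧ 0 ≤ a' * b' ∧ a' * b' ≤ 1 := by
      refine ⟨mul_nonneg ha0 hb0, ?_, mul_nonneg ha'0 hb'0, ?_⟩ <;>
        nlinarith [mul_nonneg (sub_nonneg.2 ha1) hb0, mul_nonneg (sub_nonneg.2 ha'1) hb'0]
    obtain ⟨p1, p2, p3, p4⟩ := hints
    have c00u : a * b - a' * b' ≤ 1 := by linarith
    have c00l : -1 ≤ a * b - a' * b' := by linarith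
    have c10u : a * b - a' * b' - (b - b') ≤ 1 := by
      nlinarith [mul_nonneg (sub_nonneg.2 ha1) hb0]
    have c10l : -1 ≤ a * b - a' * b' - (b - b') := by
      nlinarith [mul_nonneg hb'0 (sub_nonneg.2 ha'1)]
    have c01u : a * b - a' * b' - (a - a') ≤ 1 := by
      nlinarith [mul_nonneg (sub_nonneg.2 hb1) ha0]
    have c01l : -1 ≤ a * b - a' * b' - (a - a') := by
      nlinarith [mul_nonneg ha'0 (sub_nonneg.2 hb'1)]
    have c11u : a * b - a' * b' - (b - b') - (a - a') ≤ 1 := by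
      nlinarith [mul_nonneg (sub_nonneg.2 ha'1) (sub_nonneg.2 hb'1),
        mul_nonneg ha0 (sub_nonneg.2 hb1)]
    have c11l : -1 ≤ a * b - a' * b' - (b - b') - (a - a') := by
      nlinarith [mul_nonneg (sub_nonneg.2 ha1) (sub_nonneg.2 hb1),
        mul_nonneg ha'0 (sub_nonneg.2 hb'1)]
    have hm2 : (0:ℝ) < m ^ 2 := by positivity
    rw [abs_le]
    constructor
    · have key : m ^ 2 * (m + (m * (a * b - a' * b') - u * (b - b') - v * (a - a'))) =
          (m - u) * (m - v) * (m * (1 + (a * b - a' * b'))) +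
          u * (m - v) * (m * (1 + (a * b - a' * b' - (b - b')))) +
          (m - u) * v * (m * (1 + (a * b - a' * b' - (a - a')))) +
          u * v * (m * (1 + (a * b - a' * b' - (b - b') - (a - a')))) := by ring
      have hpos : 0 ≤ m ^ 2 * (m + (m * (a * b - a' * b') - u * (b - b') - v * (a - a'))) := by
        rw [key]
        have w1 : (0:ℝ) ≤ m - u := by linarith
        have w2 : (0:ℝ) ≤ m - v := by linarith
        have t1 := mul_nonneg (mul_nonneg w1 w2) (mul_nonneg hm (by linarith : (0:ℝ) ≤ 1 + (a * b - a' * b')))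
        have t2 := mul_nonneg (mul_nonneg hu0 w2) (mul_nonneg hm (by linarith : (0:ℝ) ≤ 1 + (a * b - a' * b' - (b - b'))))
        have t3 := mul_nonneg (mul_nonneg w1 hv0) (mul_nonneg hm (by linarith : (0:ℝ) ≤ 1 + (a * b - a' * b' - (a - a'))))
        have t4 := mul_nonneg (mul_nonneg hu0 hv0) (mul_nonneg hm (by linarith : (0:ℝ) ≤ 1 + (a * b - a' * b' - (b - b') - (a - a'))))
        linarith [t1, t2, t3, t4]
      have := (mul_nonneg_iff_of_pos_left hm2).mp hpos
      linarith
    · have key : m ^ 2 * (m - (m * (a * b - a' * b') - u * (b - b') - v * (a - a'))) =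
          (m - u) * (m - v) * (m * (1 - (a * b - a' * b'))) +
          u * (m - v) * (m * (1 - (a * b - a' * b' - (b - b')))) +
          (m - u) * v * (m * (1 - (a * b - a' * b' - (a - a')))) +
          u * v * (m * (1 - (a * b - a' * b' - (b - b') - (a - a')))) := by ring
      have hpos : 0 ≤ m ^ 2 * (m - (m * (a * b - a' * b') - u * (b - b') - v * (a - a'))) := by
        rw [key]
        have w1 : (0:ℝ) ≤ m - u := by linarith
        have w2 : (0:ℝ) ≤ m - v := by linarith
        have t1 := mul_nonneg (mul_nonneg w1 w2) (mul_nonneg hm (by linarith : (0:ℝ) ≤ 1 - (a * b - a' * b')))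
        have t2 := mul_nonneg (mul_nonneg hu0 w2) (mul_nonneg hm (by linarith : (0:ℝ) ≤ 1 - (a * b - a' * b' - (b - b'))))
        have t3 := mul_nonneg (mul_nonneg w1 hv0) (mul_nonneg hm (by linarith : (0:ℝ) ≤ 1 - (a * b - a' * b' - (a - a'))))
        have t4 := mul_nonneg (mul_nonneg hu0 hv0) (mul_nonneg hm (by linarith : (0:ℝ) ≤ 1 - (a * b - a' * b' - (b - b') - (a - a'))))
        linarith [t1, t2, t3, t4]
      have := (mul_nonneg_iff_of_pos_left hm2).mp hpos
      linarith

/-- sensitivity of ncov. -/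
theorem ncov_sensitivity (n : ℕ) (hn : 0 < n) (x y x' y' : Fin n → ℝ)
    (hx : ∀ i, x i ∈ Set.Icc (0:ℝ) 1) (hy : ∀ i, y i ∈ Set.Icc (0:ℝ) 1)
    (hx' : ∀ i, x' i ∈ Set.Icc (0:ℝ) 1) (hy' : ∀ i, y' i ∈ Set.Icc (0:ℝ) 1)
    (hneighbor : {i | (x i, y i) ≠ (x' i, y' i)}.ncard = 1) :
    |((∑ i, x i * y i) - (∑ i, x i) * (∑ i, y i) / n)
      - ((∑ i, x' i * y' i) - (∑ i, x' i) * (∑ i, y' i) / n)| ≤ 1 - 1 / n := by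
  obtain ⟨j, hj⟩ := Set.ncard_eq_one.mp hneighbor
  have heq : ∀ i, i ≠ j → x i = x' i ∧ y i = y' i := by
    intro i hi
    have h1 : (x i, y i) = (x' i, y' i) := by
      by_contra h
      have h2 : i ∈ {i | (x i, y i) ≠ (x' i, y' i)} := h
      rw [hj] at h2
      exact hi h2
    exact ⟨congrArg Prod.fst h1, congrArg Prod.snd h1⟩
  set a := x j ; set b := y j ; set a' := x' j ; set b' := y' j
  set u : ℝ := ∑ i ∈ Finset.univ.erase j, x i with hu_def
  set v : ℝ := ∑ i ∈ Finset.univ.erase j, y i with hv_def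
  set w : ℝ := ∑ i ∈ Finset.univ.erase j, x i * y i with hw_def
  have hjmem : j ∈ Finset.univ := Finset.mem_univ j
  have hSx : (∑ i, x i) = u + a := (Finset.sum_erase_add _ _ hjmem).symm
  have hSy : (∑ i, y i) = v + b := (Finset.sum_erase_add _ _ hjmem).symm
  have hSxy : (∑ i, x i * y i) = w + a * b := (Finset.sum_erase_add _ _ hjmem).symm
  have hSx' : (∑ i, x' i) = u + a' := by
    rw [← Finset.sum_erase_add _ _ hjmem]
    congr 1
    exact Finset.sum_congr rfl fun i hi => ((heq i (Finset.ne_of_mem_erase hi)).1).symm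
  have hSy' : (∑ i, y' i) = v + b' := by
    rw [← Finset.sum_erase_add _ _ hjmem]
    congr 1
    exact Finset.sum_congr rfl fun i hi => ((heq i (Finset.ne_of_mem_erase hi)).2).symm
  have hSxy' : (∑ i, x' i * y' i) = w + a' * b' := by
    rw [← Finset.sum_erase_add _ _ hjmem]
    congr 1
    refine Finset.sum_congr rfl fun i hi => ?_
    obtain ⟨h1, h2⟩ := heq i (Finset.ne_of_mem_erase hi)
    rw [h1, h2]
  have hcard : (Finset.univ.erase j).card = n - 1 := by
    rw [Finset.card_erase_of_mem hjmem, Finset.card_univ, Fintype.card_fin]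
  have hm : ((n:ℝ) - 1) = ((n - 1 : ℕ) : ℝ) := by
    rw [Nat.cast_sub hn, Nat.cast_one]
  have hu0 : 0 ≤ u := Finset.sum_nonneg fun i _ => (hx i).1
  have hv0 : 0 ≤ v := Finset.sum_nonneg fun i _ => (hy i).1
  have hum : u ≤ (n:ℝ) - 1 := by
    rw [hm]
    calc u ≤ ∑ _i ∈ Finset.univ.erase j, (1:ℝ) :=
          Finset.sum_le_sum fun i _ => (hx i).2
      _ = ((n - 1 : ℕ) : ℝ) := by rw [Finset.sum_const, hcard, nsmul_eq_mul, mul_one]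
  have hvm : v ≤ (n:ℝ) - 1 := by
    rw [hm]
    calc v ≤ ∑ _i ∈ Finset.univ.erase j, (1:ℝ) :=
          Finset.sum_le_sum fun i _ => (hy i).2
      _ = ((n - 1 : ℕ) : ℝ) := by rw [Finset.sum_const, hcard, nsmul_eq_mul, mul_one]
  have hn0 : (0:ℝ) < n := Nat.cast_pos.mpr hn
  have key := corner_aux ((n:ℝ) - 1) a b a' b' u v (by linarith)
    (hx j).1 (hx j).2 (hy j).1 (hy j).2 (hx' j).1 (hx' j).2 (hy' j).1 (hy' j).2
    hu0 hum hv0 hvm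
  have hΔ : ((∑ i, x i * y i) - (∑ i, x i) * (∑ i, y i) / n)
      - ((∑ i, x' i * y' i) - (∑ i, x' i) * (∑ i, y' i) / n)
      = (((n:ℝ) - 1) * (a * b - a' * b') - u * (b - b') - v * (a - a')) / n := by
    rw [hSx, hSy, hSxy, hSx', hSy', hSxy']
    field_simp
    ring
  rw [hΔ, abs_div, abs_of_pos hn0]
  rw [div_le_iff₀ hn0]
  calc |((n:ℝ) - 1) * (a * b - a' * b') - u * (b - b') - v * (a - a')| ≤ (n:ℝ) - 1 := key
    _ = (1 - 1 / n) * n := by field_simp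
end

section
/- Let u : X^n × R → ℝ be a utility function with GS_u = max_{r∈R} max over neighboring z, z' of |u(z,r) − u(z',r)|, where R is a finite output set. The exponential mechanism, which on input z outputs r ∈ R with probability proportional to exp(ε·u(z,r)/(2·GS_u)), is (ε, 0)-differentially private. -/
/-- the exponential mechanism over a finite output set is `(ε,0)`-DP. -/
theorem exponential_mechanism_dp {X R : Type*} [Fintype R] [Nonempty R] {n : ℕ}
    (u : (Fin n → X) → R → ℝ) (GS ε : ℝ) (hGS : 0 < GS) (hε : 0 < ε)
    (hsens : ∀ r : R, ∀ z z' : Fin n → X, {i | z i ≠ z' i}.ncard = 1 →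
      |u z r - u z' r| ≤ GS) :
    ∀ z z' : Fin n → X, {i | z i ≠ z' i}.ncard = 1 → ∀ r : R,
      Real.exp (ε * u z r / (2 * GS)) / (∑ r', Real.exp (ε * u z r' / (2 * GS)))
        ≤ Real.exp ε *
          (Real.exp (ε * u z' r / (2 * GS)) / (∑ r', Real.exp (ε * u z' r' / (2 * GS)))) := by
  intro z z' hnb r
  have key : ∀ s : R, ε * u z s / (2 * GS) ≤ ε * u z' s / (2 * GS) + ε / 2 := by
    intro s
    have h1 : u z s - u z' s ≤ GS := (abs_le.mp (hsens s z z' hnb)).2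
    rw [div_le_iff₀ (by positivity), add_mul, div_mul_cancel₀ _ (by positivity : (2:ℝ)*GS ≠ 0)]
    nlinarith [mul_le_mul_of_nonneg_left h1 hε.le]
  have key' : ∀ s : R, ε * u z' s / (2 * GS) ≤ ε * u z s / (2 * GS) + ε / 2 := by
    intro s
    have h1 : u z' s - u z s ≤ GS := by
      have := (abs_le.mp (hsens s z z' hnb)).1; linarith
    rw [div_le_iff₀ (by positivity), add_mul, div_mul_cancel₀ _ (by positivity : (2:ℝ)*GS ≠ 0)]
    nlinarith [mul_le_mul_of_nonneg_left h1 hε.le]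
  set A := ∑ r', Real.exp (ε * u z r' / (2 * GS)) with hA
  set B := ∑ r', Real.exp (ε * u z' r' / (2 * GS)) with hB
  have hApos : 0 < A := Finset.sum_pos (fun s _ => Real.exp_pos _) Finset.univ_nonempty
  have hBpos : 0 < B := Finset.sum_pos (fun s _ => Real.exp_pos _) Finset.univ_nonempty
  have hnum : Real.exp (ε * u z r / (2 * GS)) ≤
      Real.exp (ε / 2) * Real.exp (ε * u z' r / (2 * GS))  := by
    rw [← Real.exp_add]
    exact Real.exp_le_exp.mpr (by linarith [key r])
  have hden : B ≤ Real.exp (ε / 2) * A := by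
    rw [Finset.mul_sum]
    apply Finset.sum_le_sum
    intro s _
    rw [← Real.exp_add]
    exact Real.exp_le_exp.mpr (by linarith [key' s])
  have h2 : Real.exp ε = Real.exp (ε/2) * Real.exp (ε/2) := by
    rw [← Real.exp_add]; ring_nf
  rw [← mul_div_assoc, div_le_div_iff₀ hApos hBpos, h2]
  calc Real.exp (ε * u z r / (2 * GS)) * B
      ≤ (Real.exp (ε / 2) * Real.exp (ε * u z' r / (2 * GS))) * (Real.exp (ε/2) * A) :=
        mul_le_mul hnum hden hBpos.le (by positivity)
    _ = Real.exp (ε/2) * Real.exp (ε/2) * Real.exp (ε * u z' r / (2 * GS)) * A := by ring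
end

section
/- The pairing transformation in Theil-Sen with k random matchings is k-Lipschitz: for datasets d, d' of n points differing in h records, there is a coupling of the multisets of pairwise estimates T(d), T(d') (each of size kn/2) under which they differ in at most k·h elements with probability 1. -/
/-!
Couple the two runs by using the same matchings `S` for `d` and `d'`. Within one matching the
pairs are disjoint, so each record on which `d` and `d'` differ lies in at most one pair, and an
estimate can change only on a pair containing such a record: at most `h` estimates change per
matching, hence at most `k · h` over the `k` matchings.
-/

open Finset

namespace Multiset

theorem card_bind_sub_bind_le {α β : Type*} [DecidableEq β] (s : Multiset α)
    (f g : α → Multiset β) :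
    card (s.bind f - s.bind g) ≤ (s.map fun a => card (f a - g a)).sum := by
  induction s using Multiset.induction with
  | empty => simp
  | cons a s ih =>
    simp only [cons_bind, map_cons, sum_cons]
    calc card (f a + s.bind f - (g a + s.bind g))
        ≤ card (f a - g a + (s.bind f - s.bind g)) :=
          card_le_card add_tsub_add_le_tsub_add_tsub
      _ ≤ _ := by rw [card_add]; gcongr

theorem card_map_sub_map_le {α β : Type*} [DecidableEq β] (s : Multiset α)
    (f g : α → β) [DecidablePred fun a => f a ≠ g a] :
    card (s.map f - s.map g) ≤ card (s.filter fun a => f a ≠ g a) := by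
  induction s using Multiset.induction with
  | empty => simp
  | cons a s ih =>
    rw [map_cons, map_cons, ← singleton_add, ← singleton_add, filter_cons, card_add]
    refine (card_le_card add_tsub_add_le_tsub_add_tsub).trans ?_
    rw [card_add]
    gcongr
    split_ifs with h
    · simpa using card_le_card (tsub_le_self (a := ({f a} : Multiset β)) (b := {g a}))
    · simp_all

end Multiset

/-- Charging each pair `{i, σ i}` (listed by its smaller end) that meets `D` to an endpoint
in `D` is injective, since the pairs of an involution are disjoint. -/
theorem Function.Involutive.card_filter_lt_and_mem_le {α : Type*} [Fintype α] [LinearOrder α]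
    {σ : α → α} (hσ : Function.Involutive σ) (D : Finset α) :
    #{i | i < σ i ∧ (i ∈ D ∨ σ i ∈ D)} ≤ #D := by
  classical
  have not_lt_partner {i j : α} (hi : i < σ i) (hj : j < σ j) : i ≠ σ j := by
    rintro rfl
    rw [hσ j] at hi
    exact lt_asymm hi hj
  refine card_le_card_of_injOn (fun i => if i ∈ D then i else σ i) (fun i hi => ?_) ?_
  · simp only [coe_filter, mem_univ, true_and, Set.mem_ofPred_eq] at hi
    dsimp only
    split_ifs with h
    · exact h
    · exact hi.2.resolve_left h
  · intro i hi j hj hij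
    simp only [coe_filter, mem_univ, true_and, Set.mem_ofPred_eq] at hi hj
    dsimp only at hij
    split_ifs at hij
    · exact hij
    · exact absurd hij (not_lt_partner hi.1 hj.1)
    · exact absurd hij.symm (not_lt_partner hj.1 hi.1)
    · exact hσ.injective hij

theorem theilsen_pairing_lipschitz_general (n k : ℕ)
    (σ : Fin (n - 1) → Equiv.Perm (Fin n))
    (hinv : ∀ h i, σ h (σ h i) = i)
    (est : (ℝ × ℝ) → (ℝ × ℝ) → ℝ)
    (S : Finset (Fin (n - 1))) (hS : S.card = k)
    (d d' : Fin n → ℝ × ℝ) :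
    Multiset.card
      ((S.val.bind fun h =>
          (Finset.univ.filter fun i : Fin n => i < σ h i).val.map
            fun i => est (d i) (d (σ h i)))
        - (S.val.bind fun h =>
          (Finset.univ.filter fun i : Fin n => i < σ h i).val.map
            fun i => est (d' i) (d' (σ h i))))
      ≤ k * {i | d i ≠ d' i}.ncard := by
  classical
  set D : Finset (Fin n) := {i | d i ≠ d' i}
  have hD : {i | d i ≠ d' i}.ncard = #D := by
    rw [← Set.ncard_coe_finset, coe_filter]; simp
  have per_matching (h : Fin (n - 1)) :
      #{i | i < σ h i ∧ est (d i) (d (σ h i)) ≠ est (d' i) (d' (σ h i))} ≤ #D := by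
    refine (card_le_card fun i => ?_).trans
      (Function.Involutive.card_filter_lt_and_mem_le (hinv h) D)
    simp only [mem_filter, mem_univ, true_and, D]
    rintro ⟨hlt, hest⟩
    refine ⟨hlt, not_and_or.mp fun ⟨hi, hσi⟩ => hest ?_⟩
    rw [hi, hσi]
  calc _ ≤ (S.val.map fun _ => #D).sum := by
        refine (Multiset.card_bind_sub_bind_le _ _ _).trans
          (Multiset.sum_map_le_sum_map _ _ fun h _ => ?_)
        refine (Multiset.card_map_sub_map_le _ _ _).trans ?_
        rw [← filter_val, filter_filter]
        exact per_matching h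
    _ = k * {i | d i ≠ d' i}.ncard := by simp [hS, hD]

/-- the Theil-Sen pairing transformation with `k` matchings is
`k`-Lipschitz: coupling the `k` sampled matchings `S` between the two runs, the
multisets of pairwise estimates differ in at most `k · h` elements, where `h` is the
number of records in which `d` and `d'` differ. -/
theorem theilsen_pairing_lipschitz (n k : ℕ) (hn : 2 ≤ n)
    (σ : Fin (n - 1) → Equiv.Perm (Fin n))
    (hinv : ∀ h i, σ h (σ h i) = i)
    (hnofix : ∀ h i, σ h i ≠ i)
    (hdecomp : ∀ i j : Fin n, i ≠ j → ∃! h, σ h i = j)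
    (est : (ℝ × ℝ) → (ℝ × ℝ) → ℝ)
    (S : Finset (Fin (n - 1))) (hS : S.card = k)
    (d d' : Fin n → ℝ × ℝ) :
    Multiset.card
      ((S.val.bind fun h =>
          (Finset.univ.filter fun i : Fin n => i < σ h i).val.map
            fun i => est (d i) (d (σ h i)))
        - (S.val.bind fun h =>
          (Finset.univ.filter fun i : Fin n => i < σ h i).val.map
            fun i => est (d' i) (d' (σ h i))))
      ≤ k * {i | d i ≠ d' i}.ncard :=
  theilsen_pairing_lipschitz_general n k σ hinv est S hS d d'
end

section
/- Composition of zCDP: if M_1 is ρ_1-zCDP and M_2 is ρ_2-zCDP (run with independent randomness, possibly adaptively), then the composition (M_1, M_2) is (ρ_1 + ρ_2)-zCDP. -/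
open MeasureTheory
open scoped ENNReal

/-- Rényi divergence of order `a`. -/
noncomputable def renyiDiv {Ω : Type*} [MeasurableSpace Ω] (a : ℝ)
    (P Q : Measure Ω) : ℝ :=
  (a - 1)⁻¹ * Real.log (∫ x, ((P.rnDeriv Q) x).toReal ^ a ∂Q)

lemma mutuallySingular_prod_left {α β : Type*} [MeasurableSpace α] [MeasurableSpace β]
    {μ₁ ν₁ : Measure α} (μ₂ ν₂ : Measure β) [SFinite μ₂] [SFinite ν₂]
    (h : μ₁ ⟂ₘ ν₁) : μ₁.prod μ₂ ⟂ₘ ν₁.prod ν₂ := by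
  obtain ⟨u, hu, h1, h2⟩ := h
  refine ⟨u ×ˢ Set.univ, hu.prod MeasurableSet.univ, ?_, ?_⟩
  · rw [Measure.prod_prod, h1, zero_mul]
  · have : (u ×ˢ (Set.univ : Set β))ᶜ = uᶜ ×ˢ Set.univ := by
      ext z; simp
    rw [this, Measure.prod_prod, h2, zero_mul]

lemma mutuallySingular_prod_right {α β : Type*} [MeasurableSpace α] [MeasurableSpace β]
    (μ₁ ν₁ : Measure α) {μ₂ ν₂ : Measure β} [SFinite μ₁] [SFinite ν₁]
    [SFinite μ₂] [SFinite ν₂]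
    (h : μ₂ ⟂ₘ ν₂) : μ₁.prod μ₂ ⟂ₘ ν₁.prod ν₂ := by
  obtain ⟨u, hu, h1, h2⟩ := h
  refine ⟨Set.univ ×ˢ u, MeasurableSet.univ.prod hu, ?_, ?_⟩
  · rw [Measure.prod_prod, h1, mul_zero]
  · have : ((Set.univ : Set α) ×ˢ u)ᶜ = Set.univ ×ˢ uᶜ := by
      ext z; simp
    rw [this, Measure.prod_prod, h2, mul_zero]

lemma withDensity_prod_eq {α β : Type*} [MeasurableSpace α] [MeasurableSpace β]
    (μ : Measure α) (ν : Measure β) [SigmaFinite μ] [SigmaFinite ν]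
    {f : α → ℝ≥0∞} {g : β → ℝ≥0∞} (hf : Measurable f) (hg : Measurable g)
    [SigmaFinite (μ.withDensity f)] [SigmaFinite (ν.withDensity g)] :
    (μ.withDensity f).prod (ν.withDensity g)
      = (μ.prod ν).withDensity (fun z => f z.1 * g z.2) := by
  refine Measure.prod_eq fun s t hs ht => ?_
  rw [withDensity_apply _ (hs.prod ht), ← Measure.prod_restrict,
    lintegral_prod_mul hf.aemeasurable hg.aemeasurable,
    withDensity_apply _ hs, withDensity_apply _ ht]

lemma rnDeriv_prod_ae {α β : Type*} [MeasurableSpace α] [MeasurableSpace β]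
    (P Q : Measure α) (P' Q' : Measure β)
    [IsFiniteMeasure P] [IsFiniteMeasure Q] [IsFiniteMeasure P'] [IsFiniteMeasure Q'] :
    (fun z : α × β => P.rnDeriv Q z.1 * P'.rnDeriv Q' z.2)
      =ᵐ[Q.prod Q'] (P.prod P').rnDeriv (Q.prod Q') := by
  have hf := Measure.measurable_rnDeriv P Q
  have hg := Measure.measurable_rnDeriv P' Q'
  refine Measure.eq_rnDeriv ((hf.comp measurable_fst).mul (hg.comp measurable_snd))
    (s := (P.singularPart Q).prod (P'.singularPart Q')
      + (P.singularPart Q).prod (Q'.withDensity (P'.rnDeriv Q'))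
      + (Q.withDensity (P.rnDeriv Q)).prod (P'.singularPart Q')) ?_ ?_
  · refine Measure.MutuallySingular.add_left (Measure.MutuallySingular.add_left ?_ ?_) ?_
    · exact mutuallySingular_prod_left _ _ (Measure.mutuallySingular_singularPart P Q)
    · exact mutuallySingular_prod_left _ _ (Measure.mutuallySingular_singularPart P Q)
    · exact mutuallySingular_prod_right _ _ (Measure.mutuallySingular_singularPart P' Q')
  · have hP : P = P.singularPart Q + Q.withDensity (P.rnDeriv Q) :=
      P.haveLebesgueDecomposition_add Q
    have hP' : P' = P'.singularPart Q' + Q'.withDensity (P'.rnDeriv Q') :=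
      P'.haveLebesgueDecomposition_add Q'
    conv_lhs => rw [hP, hP', Measure.add_prod, Measure.prod_add, Measure.prod_add]
    rw [← withDensity_prod_eq Q Q' hf hg]
    abel

/-- composition of zCDP mechanisms with independent randomness. -/
theorem zCDP_composition {X Y₁ Y₂ : Type*} [MeasurableSpace Y₁] [MeasurableSpace Y₂]
    {n : ℕ} (M₁ : (Fin n → X) → Measure Y₁) (M₂ : (Fin n → X) → Measure Y₂)
    (ρ₁ ρ₂ : ℝ) (hρ₁ : 0 < ρ₁) (hρ₂ : 0 < ρ₂)
    (hprob₁ : ∀ d, IsProbabilityMeasure (M₁ d))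
    (hprob₂ : ∀ d, IsProbabilityMeasure (M₂ d))
    (h₁ : ∀ d d' : Fin n → X, {i | d i ≠ d' i}.ncard = 1 → ∀ a : ℝ, 1 < a →
      renyiDiv a (M₁ d) (M₁ d') ≤ ρ₁ * a)
    (h₂ : ∀ d d' : Fin n → X, {i | d i ≠ d' i}.ncard = 1 → ∀ a : ℝ, 1 < a →
      renyiDiv a (M₂ d) (M₂ d') ≤ ρ₂ * a) :
    ∀ d d' : Fin n → X, {i | d i ≠ d' i}.ncard = 1 → ∀ a : ℝ, 1 < a →
      renyiDiv a ((M₁ d).prod (M₂ d)) ((M₁ d').prod (M₂ d')) ≤ (ρ₁ + ρ₂) * a := by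
  intro d d' hd a ha
  haveI := hprob₁ d; haveI := hprob₁ d'; haveI := hprob₂ d; haveI := hprob₂ d'
  have ha1 : (0:ℝ) < a - 1 := by linarith
  set I₁ : ℝ := ∫ x, (((M₁ d).rnDeriv (M₁ d')) x).toReal ^ a ∂(M₁ d') with hI₁
  set I₂ : ℝ := ∫ y, (((M₂ d).rnDeriv (M₂ d')) y).toReal ^ a ∂(M₂ d') with hI₂
  have hI₁0 : 0 ≤ I₁ := integral_nonneg fun x => by positivity
  have hI₂0 : 0 ≤ I₂ := integral_nonneg fun x => by positivity
  -- the product integral factorizes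
  have key : (∫ z, ((((M₁ d).prod (M₂ d)).rnDeriv ((M₁ d').prod (M₂ d'))) z).toReal ^ a
      ∂((M₁ d').prod (M₂ d'))) = I₁ * I₂ := by
    have hae := rnDeriv_prod_ae (M₁ d) (M₁ d') (M₂ d) (M₂ d')
    have : (∫ z, ((((M₁ d).prod (M₂ d)).rnDeriv ((M₁ d').prod (M₂ d'))) z).toReal ^ a
        ∂((M₁ d').prod (M₂ d')))
        = ∫ z : Y₁ × Y₂, (((M₁ d).rnDeriv (M₁ d') z.1).toReal ^ a)
            * (((M₂ d).rnDeriv (M₂ d') z.2).toReal ^ a) ∂((M₁ d').prod (M₂ d')) := by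
      refine integral_congr_ae ?_
      filter_upwards [hae] with z hz
      rw [← hz, ENNReal.toReal_mul,
        Real.mul_rpow ENNReal.toReal_nonneg ENNReal.toReal_nonneg]
    rw [this]
    exact integral_prod_mul (fun x => (((M₁ d).rnDeriv (M₁ d')) x).toReal ^ a)
      (fun y => (((M₂ d).rnDeriv (M₂ d')) y).toReal ^ a)
  unfold renyiDiv
  rw [key]
  rcases eq_or_lt_of_le hI₁0 with h10 | h1pos
  · rw [← h10, zero_mul, Real.log_zero, mul_zero]
    positivity
  rcases eq_or_lt_of_le hI₂0 with h20 | h2pos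
  · rw [← h20, mul_zero, Real.log_zero, mul_zero]
    positivity
  rw [Real.log_mul (ne_of_gt h1pos) (ne_of_gt h2pos), mul_add, add_mul]
  have b₁ := h₁ d d' hd a ha
  have b₂ := h₂ d d' hd a ha
  unfold renyiDiv at b₁ b₂
  rw [← hI₁] at b₁
  rw [← hI₂] at b₂
  exact add_le_add b₁ b₂
end
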